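/- arXiv:1612.00882 — 3 statements merged into one kernel-verified Lean document; each statement's English description precedes it below -/
import Mathlib

section
/- Let γ ∈ (0,1), r_G > 0, n ≥ 1, p_1,…,p_{n−1} ∈ (0,1], and define F_j := ∏_{i=j}^{n−1} (γ p_i / (1 − γ(1−p_i))) for j < n and F_n := 1. In a chain where the goal action at state s_n yields reward r_G and self-transitions (G=1), and the policy takes the forward action at states s_j,…,s_n, the unique solution of the corresponding Bellman equations satisfies V(s_j) = F_j · r_G / (1 − γ) for all j ≤ n. Concretely: if real numbers v_j,…,v_n satisfy v_n = r_G + γ v_n and v_i = γ(p_i v_{i+1} + (1−p_i) v_i) for j ≤ i < n, then v_i = F_i r_G/(1−γ) for all j ≤ i ≤ n. -/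
theorem stmt7 (γ rG : ℝ) (hγ : γ ∈ Set.Ioo (0 : ℝ) 1) (hrG : 0 < rG)
    (n : ℕ) (hn : 1 ≤ n) (p : ℕ → ℝ) (hp : ∀ i, 1 ≤ i → i < n → p i ∈ Set.Ioc (0 : ℝ) 1)
    (j : ℕ) (hj : 1 ≤ j) (hjn : j ≤ n)
    (v : ℕ → ℝ)
    (hvn : v n = rG + γ * v n)
    (hrec : ∀ i, j ≤ i → i < n → v i = γ * (p i * v (i + 1) + (1 - p i) * v i)) :
    ∀ i, j ≤ i → i ≤ n →
      v i = (∏ k ∈ Finset.Ico i n, γ * p k / (1 - γ * (1 - p k))) * rG / (1 - γ) := by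
  obtain ⟨hγ0, hγ1⟩ := hγ
  have h1γ : (1 : ℝ) - γ ≠ 0 := by linarith
  suffices H : ∀ d i, i + d = n → j ≤ i →
      v i = (∏ k ∈ Finset.Ico i n, γ * p k / (1 - γ * (1 - p k))) * rG / (1 - γ) by
    intro i hji hin
    exact H (n - i) i (by omega) hji
  intro d
  induction d with
  | zero =>
    intro i hi hji
    have : i = n := by omega
    subst this
    rw [Finset.Ico_self, Finset.prod_empty]
    field_simp
    linarith [hvn]
  | succ d ih =>
    intro i hi hji
    have hin : i < n := by omega
    have hpI := hp i (le_trans hj hji) hin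
    have hden : (0 : ℝ) < 1 - γ * (1 - p i) := by
      nlinarith [hpI.1, hpI.2]
    have hvi := hrec i hji hin
    have hkey : v i * (1 - γ * (1 - p i)) = γ * p i * v (i + 1) := by linear_combination hvi
    have hsucc := ih (i + 1) (by omega) (by omega)
    rw [Finset.prod_eq_prod_Ico_succ_bot hin]
    have : v i = γ * p i / (1 - γ * (1 - p i)) * v (i + 1) := by
      rw [div_mul_eq_mul_div, eq_div_iff hden.ne']
      linear_combination hkey
    rw [this, hsucc]
    ring
end

section
/- Let γ ∈ (0,1), r_G > 0, p_1,…,p_{n−1} ∈ (0,1], and F_1 := ∏_{i=1}^{n−1} (γ p_i / (1 − γ(1−p_i))). Then γ·F_1 < 1, and if real numbers v_1,…,v_n satisfy v_n = r_G + γ v_1 and v_i = γ(p_i v_{i+1} + (1−p_i) v_i) for 1 ≤ i < n, then v_j = F_j · r_G / (1 − γ F_1) for all 1 ≤ j ≤ n, where F_j := ∏_{i=j}^{n−1} (γ p_i/(1−γ(1−p_i))) and F_n := 1. -/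
theorem stmt8 (γ rG : ℝ) (hγ : γ ∈ Set.Ioo (0 : ℝ) 1) (hrG : 0 < rG)
    (n : ℕ) (hn : 1 ≤ n) (p : ℕ → ℝ) (hp : ∀ i, 1 ≤ i → i < n → p i ∈ Set.Ioc (0 : ℝ) 1)
    (v : ℕ → ℝ)
    (hvn : v n = rG + γ * v 1)
    (hrec : ∀ i, 1 ≤ i → i < n → v i = γ * (p i * v (i + 1) + (1 - p i) * v i)) :
    γ * (∏ i ∈ Finset.Ico 1 n, γ * p i / (1 - γ * (1 - p i))) < 1 ∧
    ∀ j, 1 ≤ j → j ≤ n →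
      v j = (∏ k ∈ Finset.Ico j n, γ * p k / (1 - γ * (1 - p k))) * rG /
        (1 - γ * ∏ i ∈ Finset.Ico 1 n, γ * p i / (1 - γ * (1 - p i))) := by
  obtain ⟨hγ0, hγ1⟩ := hγ
  set f : ℕ → ℝ := fun i => γ * p i / (1 - γ * (1 - p i)) with hf
  have hD : ∀ i, 1 ≤ i → i < n → 0 < 1 - γ * (1 - p i) := by
    intro i h1 h2
    have hpi := hp i h1 h2
    nlinarith [hpi.1, hpi.2]
  have hfpos : ∀ i, 1 ≤ i → i < n → 0 < f i := by
    intro i h1 h2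
    have hpi := hp i h1 h2
    exact div_pos (mul_pos hγ0 hpi.1) (hD i h1 h2)
  have hfle : ∀ i, 1 ≤ i → i < n → f i ≤ 1 := by
    intro i h1 h2
    have hpi := hp i h1 h2
    rw [hf]
    rw [div_le_one (hD i h1 h2)]
    nlinarith [hpi.1, hpi.2]
  have hFpos : ∀ j, 1 ≤ j → 0 < ∏ k ∈ Finset.Ico j n, f k := by
    intro j hj
    exact Finset.prod_pos fun i hi => by
      simp only [Finset.mem_Ico] at hi
      exact hfpos i (le_trans hj hi.1) hi.2
  have hFle : ∀ j, 1 ≤ j → (∏ k ∈ Finset.Ico j n, f k) ≤ 1 := by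
    intro j hj
    apply Finset.prod_le_one
    · intro i hi
      simp only [Finset.mem_Ico] at hi
      exact (hfpos i (le_trans hj hi.1) hi.2).le
    · intro i hi
      simp only [Finset.mem_Ico] at hi
      exact hfle i (le_trans hj hi.1) hi.2
  have hγF : γ * (∏ i ∈ Finset.Ico 1 n, f i) < 1 := by
    calc γ * (∏ i ∈ Finset.Ico 1 n, f i) ≤ γ * 1 := by
          exact mul_le_mul_of_nonneg_left (hFle 1 le_rfl) hγ0.le
      _ < 1 := by linarith
  -- v j = F_j * v n
  have key : ∀ d j, 1 ≤ j → j + d = n → v j = (∏ k ∈ Finset.Ico j n, f k) * v n := by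
    intro d
    induction d with
    | zero =>
      intro j hj hjn
      simp only [Nat.add_zero] at hjn
      subst hjn
      simp
    | succ d ih =>
      intro j hj hjn
      have hjlt : j < n := by omega
      have hstep : v j = f j * v (j + 1) := by
        have h := hrec j hj hjlt
        have hDj := hD j hj hjlt
        rw [hf]
        field_simp
        nlinarith [h]
      rw [hstep, ih (j + 1) (by omega) (by omega),
        Finset.prod_eq_prod_Ico_succ_bot hjlt]
      ring
  have hF1 := hFpos 1 le_rfl
  have hvn' : v n = rG / (1 - γ * ∏ i ∈ Finset.Ico 1 n, f i) := by
    have h1 := key (n - 1) 1 le_rfl (by omega)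
    rw [h1] at hvn
    have hden : 1 - γ * ∏ i ∈ Finset.Ico 1 n, f i ≠ 0 := by linarith
    field_simp
    linarith [hvn]
  refine ⟨hγF, fun j hj hjn => ?_⟩
  have := key (n - j) j hj (by omega)
  rw [this, hvn']
  ring
end

section
/- Let γ ∈ (0,1), r_G > 0, r_D > 0, and F_j as above with F_n := 1. If real numbers v_k+1,…,v_n satisfy v_n = r_G + γ·(r_D/(1−γ)) and v_i = γ(p_i v_{i+1} + (1−p_i) v_i) for k+1 ≤ i < n (with k ≥ 1), then v_j = F_j·(r_G + γ r_D/(1−γ)) for all k+1 ≤ j ≤ n. -/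
theorem stmt9 (γ rG rD : ℝ) (hγ : γ ∈ Set.Ioo (0 : ℝ) 1) (hrG : 0 < rG) (hrD : 0 < rD)
    (n : ℕ) (p : ℕ → ℝ) (hp : ∀ i, 1 ≤ i → i < n → p i ∈ Set.Ioc (0 : ℝ) 1)
    (k : ℕ) (hk : 1 ≤ k) (hkn : k + 1 ≤ n)
    (v : ℕ → ℝ)
    (hvn : v n = rG + γ * (rD / (1 - γ)))
    (hrec : ∀ i, k + 1 ≤ i → i < n → v i = γ * (p i * v (i + 1) + (1 - p i) * v i)) :
    ∀ j, k + 1 ≤ j → j ≤ n →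
      v j = (∏ i ∈ Finset.Ico j n, γ * p i / (1 - γ * (1 - p i))) *
        (rG + γ * rD / (1 - γ)) := by
  obtain ⟨hγ0, hγ1⟩ := hγ
  suffices h : ∀ m j, k + 1 ≤ j → j ≤ n → n - j = m →
      v j = (∏ i ∈ Finset.Ico j n, γ * p i / (1 - γ * (1 - p i))) *
        (rG + γ * rD / (1 - γ)) by
    intro j hj1 hj2
    exact h (n - j) j hj1 hj2 rfl
  intro m
  induction m with
  | zero =>
    intro j hj1 hj2 hm
    have hjn : j = n := le_antisymm hj2 (by omega)
    subst hjn
    simp [hvn, mul_div_assoc]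
  | succ m ih =>
    intro j hj1 hj2 hm
    have hjn : j < n := by omega
    have hpj := hp j (by omega) hjn
    have hpos : 0 < 1 - γ * (1 - p j) := by
      nlinarith [hpj.1, hpj.2]
    have hrecj := hrec j hj1 hjn
    have hvj : v j = γ * p j / (1 - γ * (1 - p j)) * v (j + 1) := by
      field_simp
      nlinarith [hrecj]
    have ihv := ih (j + 1) (by omega) (by omega) (by omega)
    rw [hvj, ihv, Finset.prod_eq_prod_Ico_succ_bot hjn]
    ring
end
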